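/- arXiv:2504.09458 — 5 statements merged into one kernel-verified Lean document; each statement's English description precedes it below -/
import Mathlib

section
/- Let H and K be Hilbert spaces over the same scalar field (both real or both complex), let {f_j}_{j≥1} be a frame for H, and let T : H → K be a bounded linear operator with closed range. Then {Tf_j}_{j≥1} is a frame for the Hilbert space R(T), the range of T. -/
open scoped ENNReal NNReal InnerProductSpace InnerProduct

/-!
By the open mapping theorem applied to `T : H → R(T)`, every `w ∈ R(T)` has a preimage `u` with
`‖u‖ ≤ C ‖w‖`, so `‖w‖² = ⟪T† w, u⟫ ≤ C ‖w‖ ‖T† w‖`: the adjoint is bounded below on `R(T)`.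
Since `⟪w, T f_j⟫ = ⟪T† w, f_j⟫`, the frame inequalities for `T† w` then give the frame bounds
`A / C²` and `B ‖T†‖²` for `(T f_j)` on `R(T)`.
-/

theorem ENNReal.coe_mul_sq_le_of_le_mul {a c x y : ℝ≥0} (h : x ≤ c * y) :
    (a : ℝ≥0∞) * (x : ℝ≥0∞) ^ 2 ≤ ((a * c ^ 2 : ℝ≥0) : ℝ≥0∞) * (y : ℝ≥0∞) ^ 2 := by
  have : a * x ^ 2 ≤ a * c ^ 2 * y ^ 2 := by
    rw [mul_assoc, ← mul_pow]; gcongr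
  exact_mod_cast this

namespace ContinuousLinearMap

variable {𝕜 H K : Type*} [RCLike 𝕜]
  [NormedAddCommGroup H] [InnerProductSpace 𝕜 H] [CompleteSpace H]
  [NormedAddCommGroup K] [InnerProductSpace 𝕜 K] [CompleteSpace K]

theorem exists_nnnorm_le_mul_nnnorm_adjoint_of_isClosed_range {T : H →L[𝕜] K}
    (hT : IsClosed (Set.range T)) :
    ∃ C : ℝ≥0, 0 < C ∧ ∀ w ∈ Set.range T, ‖w‖₊ ≤ C * ‖(T†) w‖₊ := by
  have : CompleteSpace T.range := hT.completeSpace_coe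
  obtain ⟨C, hC0, hC⟩ := T.rangeRestrict.exists_preimage_norm_le
    (LinearMap.surjective_rangeRestrict _)
  refine ⟨⟨C, hC0.le⟩, hC0, ?_⟩
  rintro _ ⟨v, rfl⟩
  obtain ⟨u, hu, hu_le⟩ := hC ⟨T v, v, rfl⟩
  have hTu : T u = T v := congrArg Subtype.val hu
  have key : ‖T v‖ * ‖T v‖ ≤ C * ‖(T†) (T v)‖ * ‖T v‖ :=
    calc ‖T v‖ * ‖T v‖ = RCLike.re ⟪(T†) (T v), u⟫_𝕜 := by
          rw [adjoint_inner_left, hTu, inner_self_eq_norm_mul_norm]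
      _ ≤ ‖(T†) (T v)‖ * ‖u‖ := (RCLike.re_le_norm _).trans (norm_inner_le_norm _ _)
      _ ≤ ‖(T†) (T v)‖ * (C * ‖T v‖) := by gcongr; exact hu_le
      _ = C * ‖(T†) (T v)‖ * ‖T v‖ := by ring
  rcases (norm_nonneg (T v)).eq_or_lt with h0 | hpos
  · rw [← NNReal.coe_le_coe]; simp [← h0]
  · exact_mod_cast le_of_mul_le_mul_right key hpos

end ContinuousLinearMap

theorem statement9_general {𝕜 H K : Type*} [RCLike 𝕜]
    [NormedAddCommGroup H] [InnerProductSpace 𝕜 H] [CompleteSpace H]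
    [NormedAddCommGroup K] [InnerProductSpace 𝕜 K] [CompleteSpace K]
    (f : ℕ → H) (A B : ℝ≥0) (hA : 0 < A)
    (hframe : ∀ v : H,
      (A : ℝ≥0∞) * (‖v‖₊ : ℝ≥0∞) ^ 2 ≤ ∑' j, (‖(inner 𝕜 v (f j) : 𝕜)‖₊ : ℝ≥0∞) ^ 2 ∧
      ∑' j, (‖(inner 𝕜 v (f j) : 𝕜)‖₊ : ℝ≥0∞) ^ 2 ≤ (B : ℝ≥0∞) * (‖v‖₊ : ℝ≥0∞) ^ 2)
    (T : H →L[𝕜] K) (hT : IsClosed (Set.range T)) :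
    ∃ A' B' : ℝ≥0, 0 < A' ∧ A' ≤ B' ∧
      ∀ w ∈ Set.range T,
        (A' : ℝ≥0∞) * (‖w‖₊ : ℝ≥0∞) ^ 2 ≤ ∑' j, (‖(inner 𝕜 w (T (f j)) : 𝕜)‖₊ : ℝ≥0∞) ^ 2 ∧
        ∑' j, (‖(inner 𝕜 w (T (f j)) : 𝕜)‖₊ : ℝ≥0∞) ^ 2 ≤ (B' : ℝ≥0∞) * (‖w‖₊ : ℝ≥0∞) ^ 2 := by
  obtain ⟨C, hC0, hC⟩ :=
    ContinuousLinearMap.exists_nnnorm_le_mul_nnnorm_adjoint_of_isClosed_range hT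
  refine ⟨A / C ^ 2, max (A / C ^ 2) (B * ‖T†‖₊ ^ 2), by positivity, le_max_left _ _, ?_⟩
  intro w hw
  simp only [← ContinuousLinearMap.adjoint_inner_left]
  constructor
  · calc ((A / C ^ 2 : ℝ≥0) : ℝ≥0∞) * (‖w‖₊ : ℝ≥0∞) ^ 2
        ≤ ((A / C ^ 2 * C ^ 2 : ℝ≥0) : ℝ≥0∞) * (‖(T†) w‖₊ : ℝ≥0∞) ^ 2 :=
          ENNReal.coe_mul_sq_le_of_le_mul (hC w hw)
      _ = (A : ℝ≥0∞) * (‖(T†) w‖₊ : ℝ≥0∞) ^ 2 := by rw [div_mul_cancel₀ _ (by positivity)]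
      _ ≤ _ := (hframe _).1
  · calc _ ≤ (B : ℝ≥0∞) * (‖(T†) w‖₊ : ℝ≥0∞) ^ 2 := (hframe _).2
      _ ≤ ((B * ‖T†‖₊ ^ 2 : ℝ≥0) : ℝ≥0∞) * (‖w‖₊ : ℝ≥0∞) ^ 2 :=
          ENNReal.coe_mul_sq_le_of_le_mul ((T†).le_opNNNorm w)
      _ ≤ _ := by gcongr; exact le_max_right _ _

/-- Lemma 4.2 (i): the image of a frame under a bounded linear operator with closed range
is a frame for the range. -/
theorem statement9 {𝕜 H K : Type*} [RCLike 𝕜]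
    [NormedAddCommGroup H] [InnerProductSpace 𝕜 H] [CompleteSpace H]
    [NormedAddCommGroup K] [InnerProductSpace 𝕜 K] [CompleteSpace K]
    (f : ℕ → H) (A B : ℝ≥0) (hA : 0 < A) (hAB : A ≤ B)
    (hframe : ∀ v : H,
      (A : ℝ≥0∞) * (‖v‖₊ : ℝ≥0∞) ^ 2 ≤ ∑' j, (‖(inner 𝕜 v (f j) : 𝕜)‖₊ : ℝ≥0∞) ^ 2 ∧
      ∑' j, (‖(inner 𝕜 v (f j) : 𝕜)‖₊ : ℝ≥0∞) ^ 2 ≤ (B : ℝ≥0∞) * (‖v‖₊ : ℝ≥0∞) ^ 2)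
    (T : H →L[𝕜] K) (hT : IsClosed (Set.range T)) :
    ∃ A' B' : ℝ≥0, 0 < A' ∧ A' ≤ B' ∧
      ∀ w ∈ Set.range T,
        (A' : ℝ≥0∞) * (‖w‖₊ : ℝ≥0∞) ^ 2 ≤ ∑' j, (‖(inner 𝕜 w (T (f j)) : 𝕜)‖₊ : ℝ≥0∞) ^ 2 ∧
        ∑' j, (‖(inner 𝕜 w (T (f j)) : 𝕜)‖₊ : ℝ≥0∞) ^ 2 ≤ (B' : ℝ≥0∞) * (‖w‖₊ : ℝ≥0∞) ^ 2 :=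
  statement9_general f A B hA hframe T hT
end

section
/- Let A ⊆ ℝⁿ be closed, {x_j}_{j≥1} ⊆ Aᶜ, fix ε ≤ 1/4 and σ > 1, and let B_j = B(x_j, ε·dist(x_j,A)). Suppose {E_j}_{j≥1} is a collection of Lebesgue-measurable sets with pairwise disjoint interiors such that E_j ⊆ B_j, m(∂E_j) = 0, and m(E_j) ≥ (1/σ)·m(B_j) for every j, where m is Lebesgue measure. Then Σ_{j≥1} χ_{B_j}(x) ≤ 4ⁿσ for every x ∈ ℝⁿ. -/
/-!
Fix `y` lying in the balls `B_j`, `j ∈ s`, and put `d = dist(y, A)`. Since `ε ≤ 1/4`, each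
centre satisfies `(4/5) d ≤ dist(x_j, A) ≤ (4/3) d`, so every `B_j` has radius at least
`ρ = (4/5) ε d` and lies in the ball `B(y, (8/3) ε d) = B(y, (10/3) ρ)`. The interiors of the
`E_j` are disjoint, have the same measure as the `E_j` and each has measure at least
`σ⁻¹ m(B(0, ρ))`, hence `#s · σ⁻¹ m(B(0, ρ)) ≤ (10/3)ⁿ m(B(0, ρ))`, i.e. `#s ≤ (10/3)ⁿ σ ≤ 4ⁿ σ`.
-/

open MeasureTheory Metric Set
open scoped ENNReal

section InfDist

variable {α : Type*} [PseudoMetricSpace α] {A : Set α} {x y : α} {ε : ℝ}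

theorem pos_of_mem_ball_mul_infDist (hy : y ∈ ball x (ε * infDist x A)) :
    0 < ε ∧ 0 < infDist x A :=
  (pos_and_pos_or_neg_and_neg_of_mul_pos (pos_of_mem_ball hy)).resolve_right
    fun h => h.2.not_ge infDist_nonneg

variable (hε : ε ≤ 1 / 4) (hy : y ∈ ball x (ε * infDist x A))
include hε hy

theorem infDist_le_of_mem_ball_mul_infDist : infDist y A ≤ 5 / 4 * infDist x A := by
  have hyx : dist y x < ε * infDist x A := hy
  have := infDist_le_infDist_add_dist (x := y) (y := x) (s := A)
  nlinarith [(pos_of_mem_ball_mul_infDist hy).2]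

theorem le_infDist_of_mem_ball_mul_infDist : 3 / 4 * infDist x A ≤ infDist y A := by
  have hyx : dist x y < ε * infDist x A := by rw [dist_comm]; exact hy
  have := infDist_le_infDist_add_dist (x := x) (y := y) (s := A)
  nlinarith [(pos_of_mem_ball_mul_infDist hy).2]

theorem infDist_pos_of_mem_ball_mul_infDist : 0 < infDist y A := by
  linarith [le_infDist_of_mem_ball_mul_infDist hε hy, (pos_of_mem_ball_mul_infDist hy).2]

theorem radius_le_of_mem_ball_mul_infDist : 4 / 5 * (ε * infDist y A) ≤ ε * infDist x A := by
  nlinarith [infDist_le_of_mem_ball_mul_infDist hε hy, (pos_of_mem_ball_mul_infDist hy).1]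

theorem ball_mul_infDist_subset_of_mem :
    ball x (ε * infDist x A) ⊆ ball y (8 / 3 * (ε * infDist y A)) := by
  have hyx : dist x y < ε * infDist x A := by rw [dist_comm]; exact hy
  have hx : ε * infDist x A ≤ 4 / 3 * (ε * infDist y A) := by
    nlinarith [le_infDist_of_mem_ball_mul_infDist hε hy, (pos_of_mem_ball_mul_infDist hy).1]
  intro z hz
  rw [mem_ball] at hz ⊢
  linarith [dist_triangle z x y]

end InfDist

theorem card_mul_le_measure_of_pairwiseDisjoint {Ω ι : Type*} [MeasurableSpace Ω]
    (μ : Measure Ω) {s : Finset ι} {F : ι → Set Ω} {U : Set Ω} {c : ℝ≥0∞}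
    (hF : ∀ j ∈ s, MeasurableSet (F j)) (hdisj : (s : Set ι).PairwiseDisjoint F)
    (hU : ∀ j ∈ s, F j ⊆ U) (hc : ∀ j ∈ s, c ≤ μ (F j)) :
    s.card * c ≤ μ U :=
  calc s.card * c = ∑ _j ∈ s, c := by rw [Finset.sum_const, nsmul_eq_mul]
    _ ≤ ∑ j ∈ s, μ (F j) := Finset.sum_le_sum hc
    _ = μ (⋃ j ∈ s, F j) := (measure_biUnion_finset hdisj hF).symm
    _ ≤ μ U := measure_mono (iUnion₂_subset hU)

theorem natCast_le_of_mul_measure_ball_le {E : Type*} [NormedAddCommGroup E]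
    [NormedSpace ℝ E] [MeasurableSpace E] [BorelSpace E] [FiniteDimensional ℝ E]
    (μ : Measure E) [μ.IsAddHaarMeasure] {k : ℕ} {σ t ρ : ℝ} (hσ : 0 < σ) (ht : 0 < t)
    (hρ : 0 < ρ) (y : E)
    (h : k * (ENNReal.ofReal (1 / σ) * μ (ball 0 ρ)) ≤ μ (ball y (t * ρ))) :
    (k : ℝ) ≤ t ^ Module.finrank ℝ E * σ := by
  rw [Measure.addHaar_ball_mul_of_pos μ y ht, ← mul_assoc] at h
  have h' := (ENNReal.mul_le_mul_iff_left (measure_ball_pos μ 0 hρ).ne'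
    measure_ball_lt_top.ne).mp h
  rw [← ENNReal.ofReal_natCast, ← ENNReal.ofReal_mul (Nat.cast_nonneg k),
    ENNReal.ofReal_le_ofReal_iff (by positivity)] at h'
  rwa [mul_one_div, div_le_iff₀ hσ] at h'

theorem statement12_general (n : ℕ)
    (A : Set (EuclideanSpace ℝ (Fin n)))
    (x : ℕ → EuclideanSpace ℝ (Fin n))
    (ε σ : ℝ) (hε : ε ≤ 1 / 4) (hσ : 1 < σ)
    (E : ℕ → Set (EuclideanSpace ℝ (Fin n)))
    (hdisj : Pairwise fun i j => Disjoint (interior (E i)) (interior (E j)))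
    (hsub : ∀ j, E j ⊆ ball (x j) (ε * infDist (x j) A))
    (hbdry : ∀ j, volume (frontier (E j)) = 0)
    (hlow : ∀ j, ENNReal.ofReal (1 / σ) * volume (ball (x j) (ε * infDist (x j) A)) ≤
      volume (E j)) :
    ∀ y : EuclideanSpace ℝ (Fin n), ∀ s : Finset ℕ,
      (∀ j ∈ s, y ∈ ball (x j) (ε * infDist (x j) A)) → (s.card : ℝ) ≤ 4 ^ n * σ := by
  intro y s hy
  obtain rfl | ⟨j₀, hj₀⟩ := s.eq_empty_or_nonempty
  · simp only [Finset.card_empty, Nat.cast_zero]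
    positivity
  have hε₀ := (pos_of_mem_ball_mul_infDist (hy j₀ hj₀)).1
  have hd := infDist_pos_of_mem_ball_mul_infDist hε (hy j₀ hj₀)
  set ρ := 4 / 5 * (ε * infDist y A) with hρ
  have hcount : s.card * (ENNReal.ofReal (1 / σ) * volume (ball (0 : EuclideanSpace ℝ (Fin n)) ρ))
      ≤ volume (ball y (10 / 3 * ρ)) := by
    refine card_mul_le_measure_of_pairwiseDisjoint volume
      (fun j _ => isOpen_interior.measurableSet) (fun i _ j _ hij => hdisj hij)
      (fun j hj => ?_) (fun j hj => ?_)
    · refine (interior_subset.trans (hsub j)).trans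
        ((ball_mul_infDist_subset_of_mem hε (hy j hj)).trans (ball_subset_ball ?_))
      linarith [hρ]
    · rw [measure_interior_of_null_frontier (hbdry j),
        ← Measure.addHaar_ball_center volume (x j)]
      refine le_trans ?_ (hlow j)
      gcongr
      exact radius_le_of_mem_ball_mul_infDist hε (hy j hj)
  have hcard := natCast_le_of_mul_measure_ball_le volume (by linarith) (by norm_num)
    (by positivity) y hcount
  rw [finrank_euclideanSpace_fin] at hcard
  calc (s.card : ℝ) ≤ (10 / 3) ^ n * σ := hcard
    _ ≤ 4 ^ n * σ := by gcongr; norm_num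

/-- Lemma C.1 (covering lemma): if `E_j ⊆ B_j = B(x_j, ε·dist(x_j,A))` have pairwise
disjoint interiors, null boundaries and `m(E_j) ≥ (1/σ) m(B_j)`, with `ε ≤ 1/4` and
`σ > 1`, then every point lies in at most `4ⁿσ` of the balls `B_j`. -/
theorem statement12 (n : ℕ)
    (A : Set (EuclideanSpace ℝ (Fin n))) (hA : IsClosed A)
    (x : ℕ → EuclideanSpace ℝ (Fin n)) (hx : ∀ j, x j ∉ A)
    (ε σ : ℝ) (hε : ε ≤ 1 / 4) (hσ : 1 < σ)
    (E : ℕ → Set (EuclideanSpace ℝ (Fin n)))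
    (hmeas : ∀ j, MeasurableSet (E j))
    (hdisj : Pairwise fun i j => Disjoint (interior (E i)) (interior (E j)))
    (hsub : ∀ j, E j ⊆ ball (x j) (ε * infDist (x j) A))
    (hbdry : ∀ j, volume (frontier (E j)) = 0)
    (hlow : ∀ j, ENNReal.ofReal (1 / σ) * volume (ball (x j) (ε * infDist (x j) A)) ≤
      volume (E j)) :
    ∀ y : EuclideanSpace ℝ (Fin n), ∀ s : Finset ℕ,
      (∀ j ∈ s, y ∈ ball (x j) (ε * infDist (x j) A)) → (s.card : ℝ) ≤ 4 ^ n * σ :=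
  statement12_general n A x ε σ hε hσ E hdisj hsub hbdry hlow
end

section
/- Let ε ≤ 1/20, let A ⊆ ℝⁿ be closed, let Ø ⊆ Aᶜ, and suppose {x_j}_{j≥1} is an ε-fine Whitney set for Ø with respect to A. Then there exists a set of indices J ⊆ ℕ such that {x_j}_{j∈J} is a 5ε-fine Whitney set for Ø with respect to A, with covering constant N ≤ 3·20ⁿ. -/
open MeasureTheory Metric Set Module
open scoped ENNReal

/-! Select the Whitney balls `B j = B(x_j, ε d(x_j, A))` greedily in the order of their indices,
keeping `B j` whenever it misses all balls kept before. Every ball meets a kept ball, and two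
intersecting balls have comparable radii, so `5 B_i` swallows `B j` for a kept `i` meeting it:
the kept balls still cover `Ø` after enlargement by `5`. If `y` lies in several enlarged kept
balls, all their radii are comparable to `ε d(y, A)`: the (pairwise disjoint) kept balls contain
disjoint balls of radius `r = 4ε d(y, A)/5` lying in `B(y, 10 r)`, so a volume count bounds
their number by `10ⁿ`. -/

def IsGreedyDisjoint {α : Type*} (B : ℕ → Set α) : ℕ → Prop
  | j => ∀ i < j, IsGreedyDisjoint B i → Disjoint (B i) (B j)

theorem isGreedyDisjoint_iff {α : Type*} (B : ℕ → Set α) (j : ℕ) :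
    IsGreedyDisjoint B j ↔ ∀ i < j, IsGreedyDisjoint B i → Disjoint (B i) (B j) := by
  rw [IsGreedyDisjoint]

namespace IsGreedyDisjoint

variable {α : Type*} (B : ℕ → Set α)

theorem pairwiseDisjoint : {j | IsGreedyDisjoint B j}.PairwiseDisjoint B := by
  intro i hi j hj hij
  rcases hij.lt_or_gt with h | h
  · exact (isGreedyDisjoint_iff B j).1 hj i h hi
  · exact ((isGreedyDisjoint_iff B i).1 hi j h hj).symm

theorem exists_not_disjoint {j : ℕ} (hj : (B j).Nonempty) :
    ∃ i, IsGreedyDisjoint B i ∧ ¬Disjoint (B i) (B j) := by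
  by_cases hgreedy : IsGreedyDisjoint B j
  · exact ⟨j, hgreedy, by rwa [not_disjoint_iff_nonempty_inter, inter_self]⟩
  · rw [isGreedyDisjoint_iff] at hgreedy
    push Not at hgreedy
    obtain ⟨i, -, hi, hij⟩ := hgreedy
    exact ⟨i, hi, hij⟩

end IsGreedyDisjoint

section WhitneyBalls

variable {α : Type*} [PseudoMetricSpace α] {A : Set α} {x y : α} {δ ε : ℝ}

theorem infDist_le_one_add_mul_of_mem_ball (h : y ∈ ball x (δ * infDist x A)) :
    infDist y A ≤ (1 + δ) * infDist x A := by
  have := infDist_le_infDist_add_dist (x := y) (y := x) (s := A)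
  rw [mem_ball] at h
  linarith

theorem one_sub_mul_le_infDist_of_mem_ball (h : y ∈ ball x (δ * infDist x A)) :
    (1 - δ) * infDist x A ≤ infDist y A := by
  have := infDist_le_infDist_add_dist (x := x) (y := y) (s := A)
  rw [mem_ball, dist_comm] at h
  linarith

theorem ball_subset_ball_five_mul (hε : ε ≤ 1 / 3)
    (h : ¬Disjoint (ball x (ε * infDist x A)) (ball y (ε * infDist y A))) :
    ball y (ε * infDist y A) ⊆ ball x (5 * ε * infDist x A) := by
  obtain ⟨z, hzx, hzy⟩ := not_disjoint_iff.1 h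
  rw [mem_ball] at hzx hzy
  have hxy : dist y x ≤ dist z y + dist z x := dist_triangle_left y x z
  have hε0 : 0 < ε := pos_of_mul_pos_left (dist_nonneg.trans_lt hzx) infDist_nonneg
  have hcomparable : infDist y A ≤ 2 * infDist x A := by
    have := infDist_le_infDist_add_dist (x := y) (y := x) (s := A)
    nlinarith [infDist_nonneg (x := x) (s := A)]
  intro w hw
  rw [mem_ball] at hw ⊢
  calc dist w x ≤ dist w y + dist y x := dist_triangle w y x
    _ < ε * infDist y A + (ε * infDist y A + ε * infDist x A) := by linarith
    _ ≤ 5 * ε * infDist x A := by nlinarith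

end WhitneyBalls

theorem card_le_pow_finrank_of_pairwiseDisjoint_ball {E ι : Type*} [NormedAddCommGroup E]
    [NormedSpace ℝ E] [FiniteDimensional ℝ E] {s : Finset ι} {c : ι → E} {y : E} {r k : ℝ}
    (hr : 0 < r) (hk : 0 < k) (hdisj : (s : Set ι).PairwiseDisjoint fun j => ball (c j) r)
    (hsub : ∀ j ∈ s, ball (c j) r ⊆ ball y (k * r)) :
    (s.card : ℝ) ≤ k ^ finrank ℝ E := by
  borelize E
  set μ : Measure E := Measure.addHaar
  have hμ0 : μ (ball 0 r) ≠ 0 := (measure_ball_pos μ 0 hr).ne'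
  have hμtop : μ (ball 0 r) ≠ ∞ := measure_ball_lt_top.ne
  have hvolume :
      (s.card : ℝ≥0∞) * μ (ball 0 r) ≤ ENNReal.ofReal (k ^ finrank ℝ E) * μ (ball 0 r) :=
    calc (s.card : ℝ≥0∞) * μ (ball 0 r) = ∑ j ∈ s, μ (ball (c j) r) := by
          simp only [Measure.addHaar_ball_center, Finset.sum_const, nsmul_eq_mul]
      _ = μ (⋃ j ∈ s, ball (c j) r) :=
          (measure_biUnion_finset hdisj fun _ _ => measurableSet_ball).symm
      _ ≤ μ (ball y (k * r)) := measure_mono (iUnion₂_subset hsub)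
      _ = ENNReal.ofReal (k ^ finrank ℝ E) * μ (ball 0 r) :=
          Measure.addHaar_ball_mul_of_pos μ y hk r
  have := (ENNReal.mul_le_mul_iff_left hμ0 hμtop).1 hvolume
  rwa [← ENNReal.ofReal_natCast, ENNReal.ofReal_le_ofReal_iff (by positivity)] at this

theorem card_le_ten_pow_finrank {E ι : Type*} [NormedAddCommGroup E] [NormedSpace ℝ E]
    [FiniteDimensional ℝ E] {A : Set E} {ε : ℝ} (hε0 : 0 < ε) (hε : ε ≤ 1 / 20) {x : ι → E}
    {s : Finset ι} {y : E}
    (hdisj : (s : Set ι).PairwiseDisjoint fun j => ball (x j) (ε * infDist (x j) A))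
    (hy : ∀ j ∈ s, y ∈ ball (x j) (5 * ε * infDist (x j) A)) :
    (s.card : ℝ) ≤ 10 ^ finrank ℝ E := by
  rcases s.eq_empty_or_nonempty with rfl | ⟨j₀, hj₀⟩
  · simp
  set D := infDist y A
  have hupper (j) (hj : j ∈ s) : infDist (x j) A ≤ 4 / 3 * D := by
    nlinarith [one_sub_mul_le_infDist_of_mem_ball (hy j hj), infDist_nonneg (x := x j) (s := A)]
  have hlower (j) (hj : j ∈ s) : 4 / 5 * D ≤ infDist (x j) A := by
    nlinarith [infDist_le_one_add_mul_of_mem_ball (hy j hj), infDist_nonneg (x := x j) (s := A)]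
  have hD : 0 < D := by
    have := mem_ball.1 (hy j₀ hj₀)
    nlinarith [hupper j₀ hj₀, dist_nonneg (x := y) (y := x j₀)]
  refine card_le_pow_finrank_of_pairwiseDisjoint_ball (y := y) (r := 4 / 5 * ε * D) (k := 10)
    (by positivity) (by norm_num) (hdisj.mono_on fun j hj => ball_subset_ball ?_)
    fun j hj => ball_subset_ball' ?_
  · nlinarith [hlower j hj]
  · have := mem_ball.1 (hy j hj)
    rw [dist_comm] at this
    nlinarith [hupper j hj]

theorem statement14_general (n : ℕ)
    (ε : ℝ) (hε0 : 0 < ε) (hε : ε ≤ 1 / 20)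
    (A : Set (EuclideanSpace ℝ (Fin n)))
    (O : Set (EuclideanSpace ℝ (Fin n)))
    (x : ℕ → EuclideanSpace ℝ (Fin n))
    (hcover : O ⊆ ⋃ j, ball (x j) (ε * infDist (x j) A)) :
    ∃ J : Set ℕ,
      (O ⊆ ⋃ j ∈ J, ball (x j) (5 * ε * infDist (x j) A)) ∧
      (∀ y : EuclideanSpace ℝ (Fin n), ∀ s : Finset ℕ,
        ↑s ⊆ J → (∀ j ∈ s, y ∈ ball (x j) (5 * ε * infDist (x j) A)) →
          (s.card : ℝ) ≤ 3 * 20 ^ n) := by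
  set B := fun j => ball (x j) (ε * infDist (x j) A)
  refine ⟨{j | IsGreedyDisjoint B j}, fun z hz => ?_, fun y s hsJ hy => ?_⟩
  · obtain ⟨j, hj⟩ := mem_iUnion.1 (hcover hz)
    obtain ⟨i, hi, hij⟩ := IsGreedyDisjoint.exists_not_disjoint B ⟨z, hj⟩
    exact mem_biUnion hi (ball_subset_ball_five_mul (by linarith) hij hj)
  · calc (s.card : ℝ)
        ≤ 10 ^ finrank ℝ (EuclideanSpace ℝ (Fin n)) :=
          card_le_ten_pow_finrank hε0 hε ((IsGreedyDisjoint.pairwiseDisjoint B).subset hsJ) hy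
      _ = 10 ^ n := by rw [finrank_euclideanSpace_fin]
      _ ≤ 3 * 20 ^ n := by
          have : (10 : ℝ) ^ n ≤ 20 ^ n := by gcongr; norm_num
          linarith [pow_pos (by norm_num : (0 : ℝ) < 20) n]

/-- Lemma C.3 (extracting sub-Whitney sets): from any ε-fine Whitney set `{x_j}` for `Ø`
with respect to `A` (with `ε ≤ 1/20`) one can extract indices `J ⊆ ℕ` so that `{x_j}_{j∈J}`
is a 5ε-fine Whitney set for `Ø` with respect to `A` with covering constant at most
`3·20ⁿ`. -/
theorem statement14 (n : ℕ)
    (ε : ℝ) (hε0 : 0 < ε) (hε : ε ≤ 1 / 20)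
    (A : Set (EuclideanSpace ℝ (Fin n))) (hA : IsClosed A)
    (O : Set (EuclideanSpace ℝ (Fin n))) (hO : O ⊆ Aᶜ)
    (x : ℕ → EuclideanSpace ℝ (Fin n)) (hx : ∀ j, x j ∉ A)
    (hcover : O ⊆ ⋃ j, ball (x j) (ε * infDist (x j) A))
    (hconst : ∃ N : ℕ, ∀ y : EuclideanSpace ℝ (Fin n), ∀ s : Finset ℕ,
      (∀ j ∈ s, y ∈ ball (x j) (ε * infDist (x j) A)) → s.card ≤ N) :
    ∃ J : Set ℕ,
      (O ⊆ ⋃ j ∈ J, ball (x j) (5 * ε * infDist (x j) A)) ∧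
      (∀ y : EuclideanSpace ℝ (Fin n), ∀ s : Finset ℕ,
        ↑s ⊆ J → (∀ j ∈ s, y ∈ ball (x j) (5 * ε * infDist (x j) A)) →
          (s.card : ℝ) ≤ 3 * 20 ^ n) :=
  statement14_general n ε hε0 hε A O x hcover
end

section
/- Let Ω ⊊ ℂ be a nonempty open proper subset, k ≥ 1 an integer, and ε ∈ (0, 1/2]. Let {q_j}_{j≥1} ⊆ Ω be points such that, with B_j = B(q_j, ε·d(q_j)) where d(z) = dist(z, ∂Ω), every point of ℂ lies in at most N of the balls B_j (i.e. Σ_j χ_{B_j}(x) ≤ N for all x ∈ ℂ). Then for every holomorphic function F on Ω: Σ_{j≥1} d(q_j)^{2k−1} m(B_j) |F^{(k)}(q_j)|² ≤ 2^{2k−1} N ∫_Ω |F^{(k)}(z)|² d(z)^{2k−1} dA(z), where m is planar Lebesgue measure and dA planar Lebesgue measure. -/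
/-!
`F⁽ᵏ⁾` is holomorphic on `B(q_j, d(q_j)) ⊆ Ω`, so its square is too, and integrating the mean
value property of `(F⁽ᵏ⁾)²` over circles in polar coordinates gives the sub-mean-value inequality
`|F⁽ᵏ⁾(q_j)|² m(B_j) ≤ ∫_{B_j} |F⁽ᵏ⁾|²`. Since `d` is 1-Lipschitz and `ε ≤ 1/2`, `d(q_j) ≤ 2 d(z)`
on `B_j`, and bounded overlap gives `Σ_j 1_{B_j} ≤ N · 1_Ω`.
-/

open MeasureTheory Metric Set
open scoped ENNReal Real

theorem DiffContOnCl.ofReal_two_pi_mul_enorm_le_lintegral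
    {E : Type*} [NormedAddCommGroup E] [NormedSpace ℂ E] [CompleteSpace E]
    {f : ℂ → E} {c : ℂ} {R : ℝ} (hf : DiffContOnCl ℂ f (ball c |R|)) :
    ENNReal.ofReal (2 * π) * ‖f c‖ₑ ≤ ∫⁻ θ in Ioo (-π) π, ‖f (circleMap c R θ)‖ₑ := by
  have hper : Function.Periodic (fun θ ↦ f (circleMap c R θ)) (2 * π) :=
    (periodic_circleMap c R).comp f
  have hint : ∫ θ in Ioc (-π) π, f (circleMap c R θ) = (2 * π) • f c := by
    rw [← intervalIntegral.integral_of_le (by linarith [Real.pi_pos]),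
      ← hf.circleAverage, Real.circleAverage_def, smul_inv_smul₀ (by positivity),
      ← zero_add (2 * π), ← hper.intervalIntegral_add_eq (-π) 0]
    ring_nf
  calc ENNReal.ofReal (2 * π) * ‖f c‖ₑ = ‖(2 * π) • f c‖ₑ := by
        rw [enorm_smul, Real.enorm_of_nonneg (by positivity)]
    _ ≤ ∫⁻ θ in Ioc (-π) π, ‖f (circleMap c R θ)‖ₑ := hint ▸ enorm_integral_le_lintegral_enorm _
    _ = ∫⁻ θ in Ioo (-π) π, ‖f (circleMap c R θ)‖ₑ := by
        rw [Measure.restrict_congr_set Ioo_ae_eq_Ioc]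

theorem add_polarCoord_symm_eq_circleMap (c : ℂ) (p : ℝ × ℝ) :
    c + Complex.polarCoord.symm p = circleMap c p.1 p.2 := by
  simp [circleMap, Complex.exp_mul_I, ← Complex.ofReal_cos, ← Complex.ofReal_sin]

theorem lintegral_ball_eq_lintegral_circleMap (g : ℂ → ℝ≥0∞) (c : ℂ) (r : ℝ) :
    ∫⁻ z in ball c r, g z =
      ∫⁻ p in Ioo 0 r ×ˢ Ioo (-π) π, ENNReal.ofReal p.1 * g (circleMap c p.1 p.2) := by
  have hS : Ioo 0 r ×ˢ Ioo (-π) π ⊆ polarCoord.target := fun p hp ↦ ⟨hp.1.1, hp.2⟩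
  have hintegrand : ∀ p ∈ polarCoord.target,
      ENNReal.ofReal p.1 • (ball c r).indicator g (c + Complex.polarCoord.symm p) =
        (Ioo 0 r ×ˢ Ioo (-π) π).indicator
          (fun p ↦ ENNReal.ofReal p.1 * g (circleMap c p.1 p.2)) p := by
    rintro ⟨ρ, θ⟩ ⟨hρ, hθ⟩
    rw [add_polarCoord_symm_eq_circleMap]
    have hmem : circleMap c ρ θ ∈ ball c r ↔ ρ < r := by
      rw [mem_ball, mem_sphere.1 (circleMap_mem_sphere c hρ.le θ)]
    by_cases hρr : ρ < r
    · have hp : (ρ, θ) ∈ Ioo 0 r ×ˢ Ioo (-π) π := ⟨⟨hρ, hρr⟩, hθ⟩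
      rw [indicator_of_mem (hmem.2 hρr), indicator_of_mem hp, smul_eq_mul]
    · have hp : (ρ, θ) ∉ Ioo 0 r ×ˢ Ioo (-π) π := fun h ↦ hρr h.1.2
      rw [indicator_of_notMem (mt hmem.1 hρr), indicator_of_notMem hp, smul_zero]
  rw [← lintegral_indicator measurableSet_ball, ← lintegral_add_left_eq_self _ c,
    ← Complex.lintegral_comp_polarCoord_symm,
    setLIntegral_congr_fun polarCoord.open_target.measurableSet hintegrand,
    setLIntegral_indicator (measurableSet_Ioo.prod measurableSet_Ioo), inter_eq_left.mpr hS]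

theorem DifferentiableOn.enorm_mul_volume_ball_le_lintegral
    {E : Type*} [NormedAddCommGroup E] [NormedSpace ℂ E] [CompleteSpace E]
    {f : ℂ → E} {c : ℂ} {r : ℝ} (hf : DifferentiableOn ℂ f (ball c r)) :
    ‖f c‖ₑ * volume (ball c r) ≤ ∫⁻ z in ball c r, ‖f z‖ₑ := by
  set S : Set (ℝ × ℝ) := Ioo 0 r ×ˢ Ioo (-π) π
  have hS : MeasurableSet S := measurableSet_Ioo.prod measurableSet_Ioo
  have hSprod :
      volume.restrict S = (volume.restrict (Ioo 0 r)).prod (volume.restrict (Ioo (-π) π)) := by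
    rw [Measure.volume_eq_prod, Measure.prod_restrict]
  have hmaps : MapsTo (fun p : ℝ × ℝ ↦ circleMap c p.1 p.2) S (ball c r) := by
    rintro ⟨ρ, θ⟩ ⟨hρ, -⟩
    rw [mem_ball, mem_sphere.1 (circleMap_mem_sphere c hρ.1.le θ)]
    exact hρ.2
  have hmeas : AEMeasurable (fun p : ℝ × ℝ ↦ ENNReal.ofReal p.1 * ‖f (circleMap c p.1 p.2)‖ₑ)
      (volume.restrict S) := by
    refine (ENNReal.measurable_ofReal.comp measurable_fst).aemeasurable.mul ?_
    exact ((hf.continuousOn.comp (by fun_prop) hmaps).enorm).aemeasurable hS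
  calc ‖f c‖ₑ * volume (ball c r)
      = ∫⁻ ρ in Ioo 0 r, ∫⁻ θ in Ioo (-π) π, ENNReal.ofReal ρ * ‖f c‖ₑ := by
        rw [← setLIntegral_const, lintegral_ball_eq_lintegral_circleMap, hSprod,
          lintegral_prod _ (by fun_prop)]
    _ ≤ ∫⁻ ρ in Ioo 0 r, ∫⁻ θ in Ioo (-π) π, ENNReal.ofReal ρ * ‖f (circleMap c ρ θ)‖ₑ := by
        refine setLIntegral_mono' measurableSet_Ioo fun ρ hρ ↦ ?_
        rw [lintegral_const_mul' _ _ ENNReal.ofReal_ne_top, setLIntegral_const, Real.volume_Ioo,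
          lintegral_const_mul' _ _ ENNReal.ofReal_ne_top, mul_comm _ (ENNReal.ofReal _),
          sub_neg_eq_add, ← two_mul]
        gcongr
        have hρr : closedBall c |ρ| ⊆ ball c r :=
          closedBall_subset_ball (by simpa [abs_of_pos hρ.1] using hρ.2)
        exact (hf.diffContOnCl_ball hρr).ofReal_two_pi_mul_enorm_le_lintegral
    _ = ∫⁻ z in ball c r, ‖f z‖ₑ := by
        rw [lintegral_ball_eq_lintegral_circleMap, hSprod, lintegral_prod _ (hSprod ▸ hmeas)]

theorem DifferentiableOn.enorm_sq_mul_volume_ball_le_lintegral {f : ℂ → ℂ} {c : ℂ} {r : ℝ}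
    (hf : DifferentiableOn ℂ f (ball c r)) :
    ‖f c‖ₑ ^ 2 * volume (ball c r) ≤ ∫⁻ z in ball c r, ‖f z‖ₑ ^ 2 := by
  simpa only [Pi.pow_apply, enorm_pow] using (hf.pow 2).enorm_mul_volume_ball_le_lintegral

theorem ball_infDist_frontier_subset {E : Type*} [NormedAddCommGroup E] [NormedSpace ℝ E]
    {s : Set E} {x : E} (hx : x ∈ s) : ball x (infDist x (frontier s)) ⊆ s := by
  rcases (infDist_nonneg (x := x) (s := frontier s)).eq_or_lt with h | h
  · simp [← h]
  have hxint : x ∈ interior s :=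
    self_sdiff_frontier s ▸ ⟨hx, fun hxf ↦ h.ne' (infDist_zero_of_mem hxf)⟩
  have hcover : ball x (infDist x (frontier s)) ⊆ interior s ∪ (closure s)ᶜ := by
    intro y hy
    have := ball_infDist_subset_compl hy
    rw [frontier, mem_compl_iff, mem_sdiff] at this
    tauto
  -- the ball is connected, meets `interior s` and misses `frontier s`
  exact ((convex_ball _ _).isPreconnected.subset_left_of_subset_union isOpen_interior
    isClosed_closure.isOpen_compl (disjoint_compl_right.mono_left (interior_subset.trans
    subset_closure)) hcover ⟨x, mem_ball_self h, hxint⟩).trans interior_subset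

theorem infDist_le_two_mul_infDist_of_mem_ball {α : Type*} [PseudoMetricSpace α] {s : Set α}
    {x z : α} {ε : ℝ} (hε : ε ≤ 1 / 2) (hz : z ∈ ball x (ε * infDist x s)) :
    infDist x s ≤ 2 * infDist z s := by
  have := infDist_le_infDist_add_dist (x := x) (y := z) (s := s)
  have := mem_ball'.1 hz
  nlinarith [infDist_nonneg (x := x) (s := s)]

theorem ofReal_infDist_pow_mul_volume_ball_mul_enorm_sq_le {s : Set ℂ} {x : ℂ} {ε : ℝ}
    (hε : ε ≤ 1 / 2) (n : ℕ) {f : ℂ → ℂ} (hf : DifferentiableOn ℂ f (ball x (ε * infDist x s))) :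
    ENNReal.ofReal (infDist x s ^ n) * volume (ball x (ε * infDist x s)) * ‖f x‖ₑ ^ 2 ≤
      2 ^ n * ∫⁻ z in ball x (ε * infDist x s), ‖f z‖ₑ ^ 2 * ENNReal.ofReal (infDist z s ^ n) := by
  have hweight : ∀ z ∈ ball x (ε * infDist x s),
      ENNReal.ofReal (infDist x s ^ n) ≤ 2 ^ n * ENNReal.ofReal (infDist z s ^ n) := by
    intro z hz
    rw [← ENNReal.ofReal_ofNat, ← ENNReal.ofReal_pow zero_le_two,
      ← ENNReal.ofReal_mul (by positivity), ← mul_pow]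
    exact ENNReal.ofReal_le_ofReal (pow_le_pow_left₀ infDist_nonneg
      (infDist_le_two_mul_infDist_of_mem_ball hε hz) n)
  calc ENNReal.ofReal (infDist x s ^ n) * volume (ball x (ε * infDist x s)) * ‖f x‖ₑ ^ 2
      = ENNReal.ofReal (infDist x s ^ n) * (‖f x‖ₑ ^ 2 * volume (ball x (ε * infDist x s))) := by
        ring
    _ ≤ ENNReal.ofReal (infDist x s ^ n) * ∫⁻ z in ball x (ε * infDist x s), ‖f z‖ₑ ^ 2 := by
        gcongr
        exact hf.enorm_sq_mul_volume_ball_le_lintegral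
    _ = ∫⁻ z in ball x (ε * infDist x s), ENNReal.ofReal (infDist x s ^ n) * ‖f z‖ₑ ^ 2 :=
        (lintegral_const_mul' _ _ ENNReal.ofReal_ne_top).symm
    _ ≤ ∫⁻ z in ball x (ε * infDist x s),
          2 ^ n * (‖f z‖ₑ ^ 2 * ENNReal.ofReal (infDist z s ^ n)) := by
        refine setLIntegral_mono' measurableSet_ball fun z hz ↦ ?_
        rw [mul_left_comm, mul_comm]
        gcongr
        exact hweight z hz
    _ = 2 ^ n * ∫⁻ z in ball x (ε * infDist x s), ‖f z‖ₑ ^ 2 * ENNReal.ofReal (infDist z s ^ n) :=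
        lintegral_const_mul' _ _ (by simp)

theorem tsum_indicator_one_le {α ι : Type*} {B : ι → Set α} {x : α} {N : ℕ}
    (hN : ∀ t : Finset ι, (∀ i ∈ t, x ∈ B i) → t.card ≤ N) :
    ∑' i, (B i).indicator 1 x ≤ (N : ℝ≥0∞) := by
  classical
  rw [ENNReal.tsum_eq_iSup_sum]
  refine iSup_le fun t ↦ ?_
  calc ∑ i ∈ t, (B i).indicator 1 x = ((t.filter fun i ↦ x ∈ B i).card : ℝ≥0∞) := by
        simp only [indicator_apply, Pi.one_apply, Finset.sum_boole]
    _ ≤ N := by exact_mod_cast hN _ fun i hi ↦ (Finset.mem_filter.1 hi).2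

theorem MeasureTheory.Measure.sum_restrict_le_of_forall_card_le {α ι : Type*}
    [MeasurableSpace α] [Countable ι] (μ : Measure α) {B : ι → Set α} {s : Set α} {N : ℕ}
    (hB : ∀ i, MeasurableSet (B i)) (hBs : ∀ i, B i ⊆ s)
    (hN : ∀ x, ∀ t : Finset ι, (∀ i ∈ t, x ∈ B i) → t.card ≤ N) :
    Measure.sum (fun i ↦ μ.restrict (B i)) ≤ N • μ.restrict s := by
  refine Measure.le_iff.2 fun A hA ↦ ?_
  calc Measure.sum (fun i ↦ μ.restrict (B i)) A
      = ∑' i, ∫⁻ x in A ∩ s, (B i).indicator 1 x ∂μ := by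
        rw [Measure.sum_apply _ hA]
        refine tsum_congr fun i ↦ ?_
        rw [lintegral_indicator_one (hB i), Measure.restrict_apply (hB i),
          Measure.restrict_apply hA, ← inter_assoc,
          inter_eq_left.2 (inter_subset_left.trans (hBs i)), inter_comm]
    _ = ∫⁻ x in A ∩ s, ∑' i, (B i).indicator 1 x ∂μ :=
        (lintegral_tsum fun i ↦ (measurable_one.indicator (hB i)).aemeasurable).symm
    _ ≤ ∫⁻ x in A ∩ s, (N : ℝ≥0∞) ∂μ := lintegral_mono fun x ↦ tsum_indicator_one_le (hN x)
    _ = (N • μ.restrict s) A := by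
        rw [setLIntegral_const, Measure.smul_apply, Measure.restrict_apply hA, nsmul_eq_mul]

theorem statement17_general
    (Ω : Set ℂ)
    (k : ℕ) (ε : ℝ) (hε : ε ≤ 1 / 2)
    (q : ℕ → ℂ) (hq : ∀ j, q j ∈ Ω) (N : ℕ)
    (hN : ∀ y : ℂ, ∀ s : Finset ℕ,
      (∀ j ∈ s, y ∈ ball (q j) (ε * infDist (q j) (frontier Ω))) → s.card ≤ N)
    (F : ℂ → ℂ) (hF : DifferentiableOn ℂ F Ω) :
    (∑' j : ℕ,
        ENNReal.ofReal (infDist (q j) (frontier Ω) ^ (2 * k - 1)) *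
          volume (ball (q j) (ε * infDist (q j) (frontier Ω))) *
            (‖iteratedDeriv k F (q j)‖₊ : ℝ≥0∞) ^ 2) ≤
      2 ^ (2 * k - 1) * (N : ℝ≥0∞) *
        ∫⁻ z in Ω, (‖iteratedDeriv k F z‖₊ : ℝ≥0∞) ^ 2 *
          ENNReal.ofReal (infDist z (frontier Ω) ^ (2 * k - 1)) := by
  set B : ℕ → Set ℂ := fun j ↦ ball (q j) (ε * infDist (q j) (frontier Ω))
  have hBΩ : ∀ j, ball (q j) (infDist (q j) (frontier Ω)) ⊆ Ω :=
    fun j ↦ ball_infDist_frontier_subset (hq j)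
  have hB : ∀ j, B j ⊆ ball (q j) (infDist (q j) (frontier Ω)) :=
    fun j ↦ ball_subset_ball (mul_le_of_le_one_left infDist_nonneg (by linarith))
  have hG : ∀ j, DifferentiableOn ℂ (iteratedDeriv k F) (B j) := by
    intro j
    have := ((hF.mono (hBΩ j)).analyticOnNhd isOpen_ball).iterated_deriv k
    rw [← iteratedDeriv_eq_iterate] at this
    exact this.differentiableOn.mono (hB j)
  simp only [← enorm_eq_nnnorm]
  calc _ ≤ ∑' j, 2 ^ (2 * k - 1) * ∫⁻ z in B j, ‖iteratedDeriv k F z‖ₑ ^ 2 *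
          ENNReal.ofReal (infDist z (frontier Ω) ^ (2 * k - 1)) :=
        ENNReal.tsum_le_tsum fun j ↦
          ofReal_infDist_pow_mul_volume_ball_mul_enorm_sq_le hε _ (hG j)
    _ ≤ _ := by
        rw [ENNReal.tsum_mul_left, ← lintegral_sum_measure, mul_assoc, ← nsmul_eq_mul,
          ← lintegral_smul_measure]
        gcongr
        exact Measure.sum_restrict_le_of_forall_card_le volume (fun j ↦ measurableSet_ball)
          (fun j ↦ (hB j).trans (hBΩ j)) hN

/-- The discretization upper bound (estimate (3.3)/(3.4) in the proof of the Lusin frame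
theorem): if the balls `B_j = B(q_j, ε·d(q_j))`, `q_j ∈ Ω`, overlap at most `N` times,
then for every holomorphic `F` on `Ω`,
`Σ_j d(q_j)^{2k−1} m(B_j) |F^{(k)}(q_j)|² ≤ 2^{2k−1} N ∫_Ω |F^{(k)}|² d^{2k−1} dA`. -/
theorem statement17
    (Ω : Set ℂ) (hΩ : IsOpen Ω) (hne : Ω.Nonempty) (hproper : Ω ≠ Set.univ)
    (k : ℕ) (hk : 1 ≤ k) (ε : ℝ) (hε0 : 0 < ε) (hε : ε ≤ 1 / 2)
    (q : ℕ → ℂ) (hq : ∀ j, q j ∈ Ω) (N : ℕ)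
    (hN : ∀ y : ℂ, ∀ s : Finset ℕ,
      (∀ j ∈ s, y ∈ ball (q j) (ε * infDist (q j) (frontier Ω))) → s.card ≤ N)
    (F : ℂ → ℂ) (hF : DifferentiableOn ℂ F Ω) :
    (∑' j : ℕ,
        ENNReal.ofReal (infDist (q j) (frontier Ω) ^ (2 * k - 1)) *
          volume (ball (q j) (ε * infDist (q j) (frontier Ω))) *
            (‖iteratedDeriv k F (q j)‖₊ : ℝ≥0∞) ^ 2) ≤
      2 ^ (2 * k - 1) * (N : ℝ≥0∞) *
        ∫⁻ z in Ω, (‖iteratedDeriv k F z‖₊ : ℝ≥0∞) ^ 2 *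
          ENNReal.ofReal (infDist z (frontier Ω) ^ (2 * k - 1)) :=
  statement17_general Ω k ε hε q hq N hN F hF
end

section
/- Fix ε ∈ (0, 1/6]. For integers l ≥ 0 let n_l = ⌈2πε⁻¹(1 + (1+ε)^l)⌉, r_l = 1 + (1+ε)^{−l}, and for 1 ≤ j ≤ n_l let θ_{j,l} = −π + (2π/n_l)j, p_{j,l} = r_l e^{iθ_{j,l}}, φ_{j,l} = −π + (2π/n_l)(j − 1/2); set R_{−1} = (4+ε)/2 and R_l = (r_l + r_{l+1})/2 for l ≥ 0, and define the annular sector P_{j,l} = {re^{iφ} : R_l ≤ r ≤ R_{l−1}, φ_{j,l} ≤ φ ≤ φ_{j+1,l}} (angles taken modulo 2π for j = n_l). Then, with B_{j,l} = B(p_{j,l}, (3/2)ε·dist(p_{j,l},𝕋)) where 𝕋 is the unit circle and dist(p_{j,l},𝕋) = (1+ε)^{−l}: (a) P_{j,l} ⊆ B_{j,l}, and (b) m(P_{j,l}) ≥ (4/(27π))·m(B_{j,l}), where m is planar Lebesgue measure. -/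
open MeasureTheory Metric Set
open scoped ENNReal NNReal

noncomputable section

/-- `n_l = ⌈2πε⁻¹(1+(1+ε)^l)⌉`. -/
def nl (ε : ℝ) (l : ℕ) : ℕ := ⌈2 * Real.pi * ε⁻¹ * (1 + (1 + ε) ^ l)⌉₊

/-- `r_l = 1 + (1+ε)^{-l}`. -/
def rl (ε : ℝ) (l : ℕ) : ℝ := 1 + ((1 + ε) ^ l)⁻¹

/-- `θ_{j,l} = -π + (2π/n_l) j`. -/
def θjl (ε : ℝ) (j l : ℕ) : ℝ := -Real.pi + 2 * Real.pi / (nl ε l) * j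

/-- `p_{j,l} = r_l e^{iθ_{j,l}}`. -/
def pjl (ε : ℝ) (j l : ℕ) : ℂ := (rl ε l : ℂ) * Complex.exp ((θjl ε j l : ℂ) * Complex.I)

/-- `R_l = (r_l + r_{l+1})/2` for `l ≥ 0`. -/
def Rl (ε : ℝ) (l : ℕ) : ℝ := (rl ε l + rl ε (l + 1)) / 2

/-- `R_{l-1}`, with the convention `R_{-1} = (4+ε)/2`. -/
def Rprev (ε : ℝ) (l : ℕ) : ℝ := if l = 0 then (4 + ε) / 2 else Rl ε (l - 1)

/-- Half-shifted angles `φ_{j,l} = -π + (2π/n_l)(j − 1/2)` (`j` a real parameter). -/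
def φjl (ε : ℝ) (l : ℕ) (j : ℝ) : ℝ := -Real.pi + 2 * Real.pi / (nl ε l) * (j - 1 / 2)

/-- The annular sector `P_{j,l} = {re^{iφ} : R_l ≤ r ≤ R_{l−1}, φ_{j,l} ≤ φ ≤ φ_{j+1,l}}`. -/
def Pjl (ε : ℝ) (j l : ℕ) : Set ℂ :=
  {z | ∃ ρ φ : ℝ, Rl ε l ≤ ρ ∧ ρ ≤ Rprev ε l ∧
    φjl ε l j ≤ φ ∧ φ ≤ φjl ε l ((j : ℝ) + 1) ∧
    z = (ρ : ℂ) * Complex.exp ((φ : ℂ) * Complex.I)}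

/-!
Write `δ = (1+ε)^{-l} = dist(p_{j,l}, 𝕋)`. In polar coordinates `P_{j,l}` is the rectangle
`[R_l, R_{l-1}] × [θ_{j,l} - π/n_l, θ_{j,l} + π/n_l]`, where `R_{l-1} - r_l = εδ/2` and
`r_l - R_l = εδ/(2(1+ε))`, and the choice of `n_l` puts the half-arc `(π/n_l)·r_l` between
`εδ/4` and `εδ/2`. Hence every point of `P_{j,l}` lies within `εδ(1 + ε/4) < (3/2)εδ` of
`p_{j,l}`, and the area `(π/n_l)(R_{l-1}² - R_l²)` of `P_{j,l}` is at least `(13/28)(εδ)²`,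
which exceeds `(εδ)²/3 = (4/(27π))·m(B_{j,l})`.
-/

open Complex in
theorem norm_polar_sub_polar_le {ρ r : ℝ} (hρ : 0 ≤ ρ) (φ θ : ℝ) :
    ‖(ρ : ℂ) * exp (φ * I) - r * exp (θ * I)‖ ≤ ρ * |φ - θ| + |ρ - r| := by
  have hsplit : (ρ : ℂ) * exp (φ * I) - r * exp (θ * I)
      = ρ * exp (θ * I) * (exp (I * ↑(φ - θ)) - 1) + ↑(ρ - r) * exp (θ * I) := by
    rw [mul_sub, mul_assoc, ← exp_add]; push_cast; ring_nf
  calc _ ≤ ‖(ρ : ℂ) * exp (θ * I) * (exp (I * ↑(φ - θ)) - 1)‖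
          + ‖(↑(ρ - r) : ℂ) * exp (θ * I)‖ := hsplit ▸ norm_add_le _ _
    _ ≤ ρ * |φ - θ| + |ρ - r| := by
        simp only [norm_mul, norm_exp_ofReal_mul_I, norm_real, Real.norm_eq_abs, abs_of_nonneg hρ,
          mul_one]
        gcongr
        exact Real.norm_exp_I_mul_ofReal_sub_one_le

theorem infDist_sphere_zero_of_le_norm {E : Type*} [NormedAddCommGroup E] [NormedSpace ℝ E]
    {w : E} {r : ℝ} (hr : 0 ≤ r) (hw : r ≤ ‖w‖) :
    infDist w (sphere 0 r) = ‖w‖ - r := by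
  rcases eq_or_ne w 0 with rfl | hw0
  · obtain rfl : r = 0 := le_antisymm (by simpa using hw) hr
    simp
  have hw0 : 0 < ‖w‖ := norm_pos_iff.2 hw0
  have hproj : (r / ‖w‖) • w ∈ sphere (0 : E) r := by
    simp [norm_smul, abs_of_nonneg hr, hw0.ne']
  refine le_antisymm ((infDist_le_dist_of_mem hproj).trans_eq ?_) ?_
  · have hfactor : w - (r / ‖w‖) • w = (1 - r / ‖w‖) • w := by rw [sub_smul, one_smul]
    rw [dist_eq_norm, hfactor, norm_smul, Real.norm_eq_abs,
      abs_of_nonneg (by rw [sub_nonneg, div_le_one hw0]; exact hw)]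
    field_simp
  · refine (le_infDist ⟨_, hproj⟩).2 fun y hy => ?_
    rw [mem_sphere_zero_iff_norm] at hy
    rw [dist_eq_norm, ← hy]
    exact norm_sub_norm_le w y

theorem Complex.volume_image_mul_left (u : ℂ) (s : Set ℂ) :
    volume ((u * ·) '' s) = ENNReal.ofReal (normSq u) * volume s := by
  have := Measure.addHaar_image_linearMap volume (LinearMap.mulLeft ℝ u) s
  rw [← abs_of_nonneg (normSq_nonneg u), ← Algebra.norm_complex_apply, Algebra.norm_apply]
  exact this

def polarSector (a b c d : ℝ) : Set ℂ :=
  {z | ∃ ρ ψ : ℝ, a ≤ ρ ∧ ρ ≤ b ∧ c ≤ ψ ∧ ψ ≤ d ∧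
    z = (ρ : ℂ) * Complex.exp ((ψ : ℂ) * Complex.I)}

theorem polarSector_eq_image (a b c d : ℝ) :
    polarSector a b c d = Complex.polarCoord.symm '' (Icc a b ×ˢ Icc c d) := by
  ext z
  simp only [polarSector, mem_ofPred_eq, mem_image, mem_prod, mem_Icc, Prod.exists,
    Complex.polarCoord_symm_apply, Complex.exp_mul_I, Complex.ofReal_cos, Complex.ofReal_sin]
  constructor
  · rintro ⟨ρ, ψ, h1, h2, h3, h4, rfl⟩
    exact ⟨ρ, ψ, ⟨⟨h1, h2⟩, h3, h4⟩, rfl⟩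
  · rintro ⟨ρ, ψ, ⟨⟨h1, h2⟩, h3, h4⟩, rfl⟩
    exact ⟨ρ, ψ, h1, h2, h3, h4, rfl⟩

theorem Complex.volume_polarCoord_symm_image {K : Set (ℝ × ℝ)} (hK : IsCompact K)
    (hKt : K ⊆ polarCoord.target) :
    volume (Complex.polarCoord.symm '' K) = ∫⁻ p in K, ENNReal.ofReal p.1 := by
  have hS : MeasurableSet (Complex.polarCoord.symm '' K) :=
    (hK.image_of_continuousOn (Complex.polarCoord.continuousOn_symm.mono hKt)).measurableSet
  have hinj : InjOn Complex.polarCoord.symm polarCoord.target := Complex.polarCoord.symm.injOn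
  have hcongr : EqOn (fun p : ℝ × ℝ => ENNReal.ofReal p.1 •
      (Complex.polarCoord.symm '' K).indicator 1 (Complex.polarCoord.symm p))
      (K.indicator fun p => ENNReal.ofReal p.1) polarCoord.target := by
    intro p hp
    beta_reduce
    by_cases hpK : p ∈ K
    · rw [indicator_of_mem (mem_image_of_mem _ hpK), indicator_of_mem hpK, Pi.one_apply,
        smul_eq_mul, mul_one]
    · have hpK' : Complex.polarCoord.symm p ∉ Complex.polarCoord.symm '' K :=
        fun ⟨q, hq, hqp⟩ => hpK (hinj (hKt hq) hp hqp ▸ hq)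
      rw [indicator_of_notMem hpK', indicator_of_notMem hpK, smul_zero]
  rw [← lintegral_indicator_one hS, ← Complex.lintegral_comp_polarCoord_symm,
    setLIntegral_congr_fun polarCoord.open_target.measurableSet hcongr,
    lintegral_indicator hK.measurableSet, Measure.restrict_restrict hK.measurableSet,
    inter_eq_left.2 hKt]

theorem lintegral_ofReal_fst_Icc_prod_Icc {a b : ℝ} (ha : 0 ≤ a) (hab : a ≤ b) (c d : ℝ) :
    ∫⁻ p in Icc a b ×ˢ Icc c d, ENNReal.ofReal p.1 =
      ENNReal.ofReal (d - c) * ENNReal.ofReal ((b ^ 2 - a ^ 2) / 2) := by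
  rw [Measure.volume_eq_prod, ← Measure.prod_restrict, lintegral_prod _ (by fun_prop)]
  simp only [lintegral_const, Measure.restrict_apply_univ, Real.volume_Icc]
  rw [lintegral_mul_const _ (by fun_prop), mul_comm, ← ofReal_integral_eq_lintegral_ofReal]
  · rw [integral_Icc_eq_integral_Ioc, ← intervalIntegral.integral_of_le hab, integral_id]
  · exact (intervalIntegrable_iff_integrableOn_Icc_of_le hab).1
      intervalIntegral.intervalIntegrable_id
  · filter_upwards [ae_restrict_mem measurableSet_Icc] with x hx
    exact ha.trans hx.1

theorem volume_polarSector_of_neg_pi_lt_of_lt_pi {a b c d : ℝ} (ha : 0 < a) (hab : a ≤ b)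
    (hc : -Real.pi < c) (hd : d < Real.pi) :
    volume (polarSector a b c d) =
      ENNReal.ofReal (d - c) * ENNReal.ofReal ((b ^ 2 - a ^ 2) / 2) := by
  have hKt : Icc a b ×ˢ Icc c d ⊆ polarCoord.target := fun p ⟨hρ, hψ⟩ =>
    ⟨ha.trans_le hρ.1, hc.trans_le hψ.1, hψ.2.trans_lt hd⟩
  rw [polarSector_eq_image, Complex.volume_polarCoord_symm_image
    (isCompact_Icc.prod isCompact_Icc) hKt, lintegral_ofReal_fst_Icc_prod_Icc ha.le hab]

theorem image_exp_mul_polarSector (θ a b c d : ℝ) :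
    (Complex.exp (θ * Complex.I) * ·) '' polarSector a b c d =
      polarSector a b (θ + c) (θ + d) := by
  have hrot (ρ ψ : ℝ) : Complex.exp (θ * Complex.I) * (ρ * Complex.exp (ψ * Complex.I)) =
      ρ * Complex.exp (↑(θ + ψ) * Complex.I) := by
    push_cast; rw [add_mul, Complex.exp_add]; ring
  ext z
  constructor
  · rintro ⟨_, ⟨ρ, ψ, h1, h2, h3, h4, rfl⟩, rfl⟩
    exact ⟨ρ, θ + ψ, h1, h2, by linarith, by linarith, hrot ρ ψ⟩
  · rintro ⟨ρ, ψ, h1, h2, h3, h4, rfl⟩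
    refine ⟨ρ * Complex.exp (↑(ψ - θ) * Complex.I),
      ⟨ρ, ψ - θ, h1, h2, by linarith, by linarith, rfl⟩, ?_⟩
    simp only [hrot, add_sub_cancel]

theorem volume_polarSector {a b c d : ℝ} (ha : 0 < a) (hab : a ≤ b)
    (hcd : d - c < 2 * Real.pi) :
    volume (polarSector a b c d) =
      ENNReal.ofReal (d - c) * ENNReal.ofReal ((b ^ 2 - a ^ 2) / 2) := by
  set m := (c + d) / 2 with hm
  have hS : polarSector a b c d =
      (Complex.exp (m * Complex.I) * ·) '' polarSector a b (c - m) (d - m) := by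
    rw [image_exp_mul_polarSector, add_sub_cancel, add_sub_cancel]
  rw [hS, Complex.volume_image_mul_left, Complex.normSq_eq_norm_sq,
    Complex.norm_exp_ofReal_mul_I, one_pow, ENNReal.ofReal_one, one_mul,
    volume_polarSector_of_neg_pi_lt_of_lt_pi ha hab (by linarith) (by linarith),
    sub_sub_sub_cancel_right]

section AnnularSectors

open Real

variable {ε : ℝ}

theorem Pjl_eq_polarSector (ε : ℝ) (j l : ℕ) :
    Pjl ε j l = polarSector (Rl ε l) (Rprev ε l) (φjl ε l j) (φjl ε l (j + 1)) :=
  rfl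

theorem Rl_eq (hε : 1 + ε ≠ 0) (l : ℕ) :
    Rl ε l = 1 + ((1 + ε) ^ l)⁻¹ - ε * ((1 + ε) ^ l)⁻¹ / (2 * (1 + ε)) := by
  rw [Rl, rl, rl, pow_succ]
  field_simp
  ring

theorem Rprev_eq (hε : 1 + ε ≠ 0) (l : ℕ) :
    Rprev ε l = 1 + ((1 + ε) ^ l)⁻¹ + ε * ((1 + ε) ^ l)⁻¹ / 2 := by
  rcases l with _ | l
  · simp only [Rprev, if_true, pow_zero, inv_one]
    ring
  · rw [Rprev, if_neg l.succ_ne_zero, Nat.add_sub_cancel, Rl, rl, rl, pow_succ]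
    field_simp
    ring

theorem infDist_pjl (hε : 0 ≤ 1 + ε) (j l : ℕ) :
    infDist (pjl ε j l) (sphere (0 : ℂ) 1) = ((1 + ε) ^ l)⁻¹ := by
  have hδ : 0 ≤ ((1 + ε) ^ l)⁻¹ := inv_nonneg.2 (pow_nonneg hε l)
  have hnorm : ‖pjl ε j l‖ = 1 + ((1 + ε) ^ l)⁻¹ := by
    rw [pjl, norm_mul, Complex.norm_exp_ofReal_mul_I, mul_one, Complex.norm_real, rl,
      Real.norm_of_nonneg (by linarith)]
  rw [infDist_sphere_zero_of_le_norm zero_le_one (by linarith), hnorm, add_sub_cancel_left]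

theorem φjl_eq (ε : ℝ) (j l : ℕ) : φjl ε l j = θjl ε j l - π / nl ε l := by
  rw [φjl, θjl]
  ring

theorem φjl_add_one_eq (ε : ℝ) (j l : ℕ) : φjl ε l (j + 1) = θjl ε j l + π / nl ε l := by
  rw [φjl, θjl]
  ring

theorem pi_div_nl_mul_bounds (hε0 : 0 < ε) (hε : ε ≤ 1 / 6) (l : ℕ) :
    ε * ((1 + ε) ^ l)⁻¹ / 4 ≤ π / nl ε l * (1 + ((1 + ε) ^ l)⁻¹) ∧
      π / nl ε l * (1 + ((1 + ε) ^ l)⁻¹) ≤ ε * ((1 + ε) ^ l)⁻¹ / 2 := by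
  set A := 2 * π * ε⁻¹ * (1 + (1 + ε) ^ l) with hA
  set δ := ((1 + ε) ^ l)⁻¹ with hδdef
  have hq : 1 ≤ (1 + ε) ^ l := one_le_pow₀ (by linarith)
  have hδ : 0 < δ := by positivity
  have hAεδ : A * (ε * δ) = 2 * π * (1 + δ) := by
    rw [hA, hδdef]
    field_simp
    ring
  have hA1 : 1 ≤ A := by
    have : 6 ≤ ε⁻¹ := by rw [le_inv_comm₀ (by norm_num) hε0]; linarith
    rw [hA]
    nlinarith [pi_gt_three, mul_le_mul_of_nonneg_left hq (inv_nonneg.2 hε0.le)]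
  have hAN : A ≤ nl ε l := Nat.le_ceil A
  have hNA : (nl ε l : ℝ) ≤ 2 * A := (Nat.ceil_lt_add_one (by linarith)).le.trans (by linarith)
  have hN : (0 : ℝ) < nl ε l := by linarith
  have hεδ : 0 < ε * δ := by positivity
  rw [div_mul_eq_mul_div, le_div_iff₀ hN, div_le_iff₀ hN]
  constructor <;> nlinarith [mul_le_mul_of_nonneg_right hAN hεδ.le,
    mul_le_mul_of_nonneg_right hNA hεδ.le]

theorem Pjl_subset_ball (hε0 : 0 < ε) (hε : ε ≤ 1 / 6) (j l : ℕ) :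
    Pjl ε j l ⊆ ball (pjl ε j l) (3 / 2 * ε * infDist (pjl ε j l) (sphere (0 : ℂ) 1)) := by
  rw [Pjl_eq_polarSector]
  rintro z ⟨ρ, φ, hρl, hρu, hφl, hφu, rfl⟩
  have hε1 : 0 < 1 + ε := by linarith
  rw [Rl_eq hε1.ne'] at hρl
  rw [Rprev_eq hε1.ne'] at hρu
  rw [φjl_eq] at hφl
  rw [φjl_add_one_eq] at hφu
  obtain ⟨-, hα⟩ := pi_div_nl_mul_bounds hε0 hε l
  rw [mem_ball, dist_eq_norm, infDist_pjl hε1.le, pjl]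
  set δ := ((1 + ε) ^ l)⁻¹
  set α := π / nl ε l
  have hδ : 0 < δ := by positivity
  have hα0 : 0 ≤ α := by positivity
  have hq : ε * δ / (2 * (1 + ε)) ≤ ε * δ / 2 :=
    div_le_div_of_nonneg_left (by positivity) (by norm_num) (by linarith)
  have hρ : 0 ≤ ρ := by nlinarith
  calc ‖(ρ : ℂ) * Complex.exp (φ * Complex.I) - rl ε l * Complex.exp (θjl ε j l * Complex.I)‖
      ≤ ρ * |φ - θjl ε j l| + |ρ - rl ε l| := norm_polar_sub_polar_le hρ φ _
    _ ≤ ρ * α + ε * δ / 2 := by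
        gcongr
        · exact abs_le.2 ⟨by linarith, by linarith⟩
        · exact abs_le.2 ⟨by rw [rl]; linarith, by rw [rl]; linarith⟩
    _ < 3 / 2 * ε * δ := by nlinarith [mul_le_mul_of_nonneg_left hρu hα0]

theorem volume_Pjl (hε0 : 0 < ε) (hε : ε ≤ 1 / 6) (j l : ℕ) :
    volume (Pjl ε j l) =
      ENNReal.ofReal (2 * (π / nl ε l)) * ENNReal.ofReal ((Rprev ε l ^ 2 - Rl ε l ^ 2) / 2) := by
  have hε1 : 0 < 1 + ε := by linarith
  obtain ⟨-, hα⟩ := pi_div_nl_mul_bounds hε0 hε l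
  have hδ : 0 < ((1 + ε) ^ l)⁻¹ := by positivity
  have hq : ε * ((1 + ε) ^ l)⁻¹ / (2 * (1 + ε)) ≤ ε * ((1 + ε) ^ l)⁻¹ / 2 :=
    div_le_div_of_nonneg_left (by positivity) (by norm_num) (by linarith)
  have hangle : φjl ε l (j + 1) - φjl ε l j = 2 * (π / nl ε l) := by
    rw [φjl_eq, φjl_add_one_eq]
    ring
  rw [Pjl_eq_polarSector, ← hangle]
  refine volume_polarSector ?_ ?_ ?_
  · rw [Rl_eq hε1.ne']
    nlinarith
  · rw [Rl_eq hε1.ne', Rprev_eq hε1.ne']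
    have : 0 ≤ ε * ((1 + ε) ^ l)⁻¹ / (2 * (1 + ε)) := by positivity
    linarith
  · rw [hangle]
    nlinarith [pi_gt_three]

theorem volume_ball_le_volume_Pjl (hε0 : 0 < ε) (hε : ε ≤ 1 / 6) (j l : ℕ) :
    ENNReal.ofReal (4 / (27 * π)) *
        volume (ball (pjl ε j l) (3 / 2 * ε * infDist (pjl ε j l) (sphere (0 : ℂ) 1))) ≤
      volume (Pjl ε j l) := by
  have hε1 : 0 < 1 + ε := by linarith
  obtain ⟨hα, -⟩ := pi_div_nl_mul_bounds hε0 hε l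
  rw [volume_Pjl hε0 hε, Complex.volume_ball, infDist_pjl hε1.le, Rl_eq hε1.ne',
    Rprev_eq hε1.ne', ← ENNReal.ofReal_coe_nnreal, NNReal.coe_real_pi]
  set δ := ((1 + ε) ^ l)⁻¹
  set α := π / nl ε l
  have hδ : 0 < δ := by positivity
  have hα0 : 0 ≤ α := by positivity
  have hq : 3 / 7 * (ε * δ) ≤ ε * δ / (2 * (1 + ε)) := by
    rw [le_div_iff₀ (by positivity)]
    nlinarith [mul_le_mul_of_nonneg_left hε (by positivity : (0 : ℝ) ≤ ε * δ)]
  rw [← ENNReal.ofReal_pow (by positivity), ← ENNReal.ofReal_mul (by positivity),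
    ← ENNReal.ofReal_mul (by positivity), ← ENNReal.ofReal_mul (by positivity)]
  refine ENNReal.ofReal_le_ofReal ?_
  set q := ε * δ / (2 * (1 + ε))
  have hq2 : q ≤ ε * δ / 2 :=
    div_le_div_of_nonneg_left (by positivity) (by norm_num) (by linarith)
  calc 4 / (27 * π) * ((3 / 2 * ε * δ) ^ 2 * π) = (ε * δ) ^ 2 / 3 := by
        field_simp
        ring
    _ ≤ ε * δ / 4 * (2 * (ε * δ / 2 + 3 / 7 * (ε * δ))) := by nlinarith [sq_nonneg (ε * δ)]
    _ ≤ α * (1 + δ) * (2 * (ε * δ / 2 + q)) := by gcongr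
    _ ≤ 2 * α * (((1 + δ + ε * δ / 2) ^ 2 - (1 + δ - q) ^ 2) / 2) := by
        nlinarith [mul_nonneg hα0 (mul_nonneg (by positivity : 0 ≤ ε * δ / 2 + q)
          (sub_nonneg.2 hq2))]

end AnnularSectors

/-- Geometry of the annular sectors (Appendix C): for `0 < ε ≤ 1/6`, `l ≥ 0` and
`1 ≤ j ≤ n_l`, with `B_{j,l} = B(p_{j,l}, (3/2)ε·dist(p_{j,l},𝕋))`:
(a) `P_{j,l} ⊆ B_{j,l}`, and (b) `m(P_{j,l}) ≥ (4/(27π)) m(B_{j,l})`. -/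
theorem statement19 (ε : ℝ) (hε0 : 0 < ε) (hε : ε ≤ 1 / 6) :
    ∀ l j : ℕ, 1 ≤ j → j ≤ nl ε l →
      (Pjl ε j l ⊆
        ball (pjl ε j l) (3 / 2 * ε * infDist (pjl ε j l) (sphere (0 : ℂ) 1))) ∧
      (ENNReal.ofReal (4 / (27 * Real.pi)) *
          volume (ball (pjl ε j l) (3 / 2 * ε * infDist (pjl ε j l) (sphere (0 : ℂ) 1))) ≤
        volume (Pjl ε j l)) :=
  fun l j _ _ => ⟨Pjl_subset_ball hε0 hε j l, volume_ball_le_volume_Pjl hε0 hε j l⟩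

end
end
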